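/- arXiv:2502.00150 — 3 statements merged into one kernel-verified Lean document; each statement's English description precedes it below -/
import Mathlib

section
/- If M and N are positive semidefinite Hermitian n×n matrices with M ⪰ N in the Loewner order, then 0 ≤ logdet(I + M) − logdet(I + N) ≤ logdet(I + M − N). -/
/-!
Write `M - N = S * S` with `S` self-adjoint and put `X = 1 + N`. Sylvester's identity
`det (1 + A * B) = det (1 + B * A)` gives `det (X + S * S) = det X * det (1 + S * X⁻¹ * S)`.
Since `0 ≤ X⁻¹ ≤ 1`, we have `1 ≤ 1 + S * X⁻¹ * S ≤ 1 + S * S`, and the same identity shows that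
the determinant is monotone on positive definite matrices. Hence
`det (1 + N) ≤ det (1 + M) ≤ det (1 + N) * det (1 + (M - N))`; take logarithms.
-/

open Matrix
open scoped MatrixOrder

namespace Matrix

theorem posDef_of_one_le {n : Type*} [DecidableEq n] {X : Matrix n n ℝ} (hX : 1 ≤ X) :
    X.PosDef := by
  simpa using PosDef.one.add_posSemidef hX

variable {n : Type*} [Fintype n] [DecidableEq n]

theorem det_add_mul_self_eq {R : Type*} [CommRing R] {X : Matrix n n R} (hX : IsUnit X.det)
    (S : Matrix n n R) : (X + S * S).det = X.det * (1 + S * X⁻¹ * S).det := by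
  have hfactor : X + S * S = X * (1 + X⁻¹ * S * S) := by
    rw [Matrix.mul_add, Matrix.mul_one, ← Matrix.mul_assoc, ← Matrix.mul_assoc,
      mul_nonsing_inv X hX, Matrix.one_mul]
  rw [hfactor, det_mul, det_one_add_mul_comm, Matrix.mul_assoc]

theorem one_le_det_of_one_le {X : Matrix n n ℝ} (hX : 1 ≤ X) : 1 ≤ X.det := by
  have hXh : X.IsHermitian := (nonneg_iff_posSemidef.mp (zero_le_one.trans hX)).isHermitian
  rw [hXh.det_eq_prod_eigenvalues]
  exact Finset.one_le_prod fun i _ =>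
    (CFC.one_le_iff X).mp hX _ (hXh.eigenvalues_mem_spectrum_real i)

theorem det_le_det_of_le {X Y : Matrix n n ℝ} (hX : X.PosDef) (hXY : X ≤ Y) : X.det ≤ Y.det := by
  obtain ⟨S, hS, hSS⟩ : ∃ S : Matrix n n ℝ, IsSelfAdjoint S ∧ S * S = Y - X :=
    ⟨CFC.sqrt (Y - X), IsSelfAdjoint.of_nonneg (CFC.sqrt_nonneg _),
      CFC.sqrt_mul_sqrt_self _ (sub_nonneg.mpr hXY)⟩
  have hY : Y = X + S * S := by rw [hSS]; abel
  have hle : 1 ≤ 1 + S * X⁻¹ * S :=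
    le_add_of_nonneg_right (hS.conjugate_nonneg hX.inv.posSemidef.nonneg)
  rw [hY, det_add_mul_self_eq hX.det_pos.ne'.isUnit S]
  exact le_mul_of_one_le_right hX.det_pos.le (one_le_det_of_one_le hle)

theorem inv_le_one_of_one_le {X : Matrix n n ℝ} (hX : 1 ≤ X) : X⁻¹ ≤ 1 := by
  have hXpd := posDef_of_one_le hX
  refine (CFC.le_one_iff (R := ℝ) X⁻¹ hXpd.inv.isHermitian).mpr fun x hx => ?_
  rw [← inv_inv x, ← hXpd.isUnit.unit_spec, ← coe_units_inv, spectrum.inv₀_mem_inv_iff] at hx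
  simpa using inv_le_one_of_one_le₀ ((CFC.one_le_iff X).mp hX _ hx)

theorem det_add_le_det_mul_det_one_add {X B : Matrix n n ℝ} (hX : 1 ≤ X) (hB : 0 ≤ B) :
    (X + B).det ≤ X.det * (1 + B).det := by
  have hXpd := posDef_of_one_le hX
  obtain ⟨S, hS, rfl⟩ : ∃ S : Matrix n n ℝ, IsSelfAdjoint S ∧ S * S = B :=
    ⟨CFC.sqrt B, IsSelfAdjoint.of_nonneg (CFC.sqrt_nonneg _), CFC.sqrt_mul_sqrt_self B hB⟩
  have hconj_pd : (1 + S * X⁻¹ * S).PosDef :=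
    PosDef.one.add_posSemidef <|
      nonneg_iff_posSemidef.mp (hS.conjugate_nonneg hXpd.inv.posSemidef.nonneg)
  have hconj_le : 1 + S * X⁻¹ * S ≤ 1 + S * S := by
    simpa using add_le_add_left (hS.conjugate_le_conjugate (inv_le_one_of_one_le hX)) 1
  rw [det_add_mul_self_eq hXpd.det_pos.ne'.isUnit S]
  exact mul_le_mul_of_nonneg_left (det_le_det_of_le hconj_pd hconj_le) hXpd.det_pos.le

end Matrix

theorem stmt1_general (n : ℕ) (M N : Matrix (Fin n) (Fin n) ℝ)
    (hN : N.PosSemidef) (hMN : (M - N).PosSemidef) :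
    0 ≤ Real.log (1 + M).det - Real.log (1 + N).det ∧
      Real.log (1 + M).det - Real.log (1 + N).det ≤ Real.log (1 + (M - N)).det := by
  have hN_one : 1 ≤ 1 + N := le_add_of_nonneg_right hN.nonneg
  have hIN := posDef_of_one_le hN_one
  have hNM : 1 + N ≤ 1 + M := add_le_add_right (sub_nonneg.mp hMN.nonneg) 1
  have hIMN := posDef_of_one_le (le_add_of_nonneg_right hMN.nonneg : 1 ≤ 1 + (M - N))
  have hmono : (1 + N).det ≤ (1 + M).det := det_le_det_of_le hIN hNM
  have hsubadd : (1 + M).det ≤ (1 + N).det * (1 + (M - N)).det := by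
    simpa using det_add_le_det_mul_det_one_add hN_one hMN.nonneg
  constructor
  · exact sub_nonneg.mpr (Real.log_le_log hIN.det_pos hmono)
  · rw [sub_le_iff_le_add', ← Real.log_mul hIN.det_pos.ne' hIMN.det_pos.ne']
    exact Real.log_le_log (hIN.det_pos.trans_le hmono) hsubadd

/-- If `M ⪰ N ⪰ 0` are Hermitian (real symmetric) PSD matrices, then
`0 ≤ logdet(I + M) − logdet(I + N) ≤ logdet(I + M − N)`. -/
theorem stmt1 (n : ℕ) (M N : Matrix (Fin n) (Fin n) ℝ)
    (hM : M.PosSemidef) (hN : N.PosSemidef) (hMN : (M - N).PosSemidef) :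
    0 ≤ Real.log (1 + M).det - Real.log (1 + N).det ∧
      Real.log (1 + M).det - Real.log (1 + N).det ≤ Real.log (1 + (M - N)).det :=
  stmt1_general n M N hN hMN
end

section
/- Let Z be a real matrix of size m×N, and let Γ_mod = blkdiag(B, Q) where B and Q are symmetric positive semidefinite blocks partitioning the N coordinates. Then 0 ≤ logdet(I + Z Γ_mod Zᵀ) − logdet(I + Z blkdiag(B, 0) Zᵀ) ≤ logdet(I + Z blkdiag(0, Q) Zᵀ). -/
/-!
With `Z₁`, `Z₂` the column blocks of `Z`, put `A = Z₁ B Z₁ᵀ` and `C = Z₂ Q Z₂ᵀ`; the three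
determinants are those of `1 + A + C`, `1 + A` and `1 + C`. The lower bound is monotonicity of
`det` under adding a positive semidefinite matrix. For the upper bound write `C = S²` with `S`
symmetric: then `det (1 + A + C) = det (1 + A) * det (1 + S (1 + A)⁻¹ S)`, and
`S (1 + A)⁻¹ S ≤ S² = C` in the Loewner order because `(1 + A)⁻¹ ≤ 1`.
-/

open Matrix
open scoped MatrixOrder

namespace Matrix

variable {n : Type*} [Fintype n] [DecidableEq n]

theorem PosSemidef.one_le_det_one_add {M : Matrix n n ℝ} (hM : M.PosSemidef) :
    1 ≤ (1 + M).det := by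
  set U := hM.1.eigenvectorUnitary
  have hdiag :
      1 + M = U * diagonal (fun i => 1 + hM.1.eigenvalues i) * star (U : Matrix n n ℝ) := by
    conv_lhs => rw [hM.1.spectral_theorem, ← map_one (Unitary.conjStarAlgAut ℝ _ U), ← map_add]
    rw [Unitary.conjStarAlgAut_apply, ← diagonal_one, diagonal_add]
    rfl
  rw [hdiag, det_mul_comm, ← Matrix.mul_assoc, Unitary.coe_star_mul_self, Matrix.one_mul,
    det_diagonal]
  exact Finset.one_le_prod fun i _ => le_add_of_nonneg_right (hM.eigenvalues_nonneg i)

theorem det_add_mul_self {R : Type*} [CommRing R] {P : Matrix n n R} (hP : IsUnit P)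
    (S : Matrix n n R) :
    (P + S * S).det = P.det * (1 + S * P⁻¹ * S).det := by
  have hP' : IsUnit P.det := (isUnit_iff_isUnit_det P).mp hP
  calc (P + S * S).det = (P * (1 + P⁻¹ * S * S)).det := by
        rw [mul_add, mul_one, ← Matrix.mul_assoc, ← Matrix.mul_assoc, mul_nonsing_inv P hP',
          Matrix.one_mul]
    _ = P.det * (1 + S * P⁻¹ * S).det := by
        rw [det_mul, det_one_add_mul_comm, Matrix.mul_assoc]

theorem PosDef.det_le_det_add {P Y : Matrix n n ℝ} (hP : P.PosDef) (hY : Y.PosSemidef) :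
    P.det ≤ (P + Y).det := by
  set S := CFC.sqrt Y
  have hS : Sᴴ = S := (CFC.sqrt_nonneg Y).posSemidef.1.eq
  have hSPS : (S * P⁻¹ * S).PosSemidef := by
    simpa only [hS] using hP.inv.posSemidef.conjTranspose_mul_mul_same S
  rw [← CFC.sqrt_mul_sqrt_self Y hY.nonneg, det_add_mul_self hP.isUnit]
  exact le_mul_of_one_le_right hP.det_pos.le hSPS.one_le_det_one_add

theorem PosSemidef.one_sub_inv_one_add {A : Matrix n n ℝ} (hA : A.PosSemidef) :
    (1 - (1 + A)⁻¹).PosSemidef := by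
  set P := 1 + A
  have hP : P.PosDef := PosDef.one.add_posSemidef hA
  have hPi : P⁻¹ᴴ = P⁻¹ := hP.inv.1.eq
  -- `1 - P⁻¹ = P⁻¹ (P - 1) = P⁻¹ (A P) P⁻¹`, and `A P = A + Aᴴ A` is positive semidefinite
  have hAP : (A * P).PosSemidef := by
    rw [mul_add, mul_one]
    simpa only [hA.1.eq] using hA.add (posSemidef_conjTranspose_mul_self A)
  have hAP_eq : 1 - P⁻¹ = P⁻¹ * (A * P) * P⁻¹ := by
    have hA_eq : A = P - 1 := (add_sub_cancel_left 1 A).symm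
    have hPinv : P * P⁻¹ = 1 := mul_nonsing_inv P hP.det_pos.ne'.isUnit
    rw [← Matrix.mul_assoc, Matrix.mul_assoc _ P, hPinv, Matrix.mul_one, hA_eq, Matrix.mul_sub,
      nonsing_inv_mul P hP.det_pos.ne'.isUnit, Matrix.mul_one]
  rw [hAP_eq]
  simpa only [hPi] using hAP.mul_mul_conjTranspose_same P⁻¹

theorem PosSemidef.det_one_add_add_le {A C : Matrix n n ℝ} (hA : A.PosSemidef)
    (hC : C.PosSemidef) : (1 + (A + C)).det ≤ (1 + A).det * (1 + C).det := by
  set P := 1 + A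
  have hP : P.PosDef := PosDef.one.add_posSemidef hA
  set S := CFC.sqrt C
  have hS : Sᴴ = S := (CFC.sqrt_nonneg C).posSemidef.1.eq
  have hSS : S * S = C := CFC.sqrt_mul_sqrt_self C hC.nonneg
  have hSPS : (S * P⁻¹ * S).PosSemidef := by
    simpa only [hS] using hP.inv.posSemidef.conjTranspose_mul_mul_same S
  have hgap : (S * (1 - P⁻¹) * S).PosSemidef := by
    simpa only [hS] using hA.one_sub_inv_one_add.conjTranspose_mul_mul_same S
  have hsplit : 1 + C = (1 + S * P⁻¹ * S) + S * (1 - P⁻¹) * S := by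
    rw [Matrix.mul_sub, Matrix.sub_mul, Matrix.mul_one, hSS]; abel
  rw [← add_assoc, ← hSS, det_add_mul_self hP.isUnit, hSS, hsplit]
  exact mul_le_mul_of_nonneg_left ((PosDef.one.add_posSemidef hSPS).det_le_det_add hgap)
    hP.det_pos.le

theorem mul_fromBlocks_zero_mul_transpose {m n₁ n₂ R : Type*} [Fintype n₁] [Fintype n₂]
    [CommRing R] (Z : Matrix m (n₁ ⊕ n₂) R) (B : Matrix n₁ n₁ R) (Q : Matrix n₂ n₂ R) :
    Z * fromBlocks B 0 0 Q * Zᵀ = Z.toCols₁ * B * Z.toCols₁ᵀ + Z.toCols₂ * Q * Z.toCols₂ᵀ := by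
  conv_lhs => rw [← fromCols_toCols Z, transpose_fromCols]
  rw [fromCols_mul_fromBlocks, fromCols_mul_fromRows]
  simp only [Matrix.mul_zero, add_zero, zero_add]

end Matrix

/-- For `Γ_mod = blkdiag(B, Q)` with PSD blocks `B`, `Q`:
`0 ≤ logdet(I + Z Γ_mod Zᵀ) − logdet(I + Z blkdiag(B,0) Zᵀ) ≤ logdet(I + Z blkdiag(0,Q) Zᵀ)`. -/
theorem stmt8 (m p q : ℕ) (Z : Matrix (Fin m) (Fin p ⊕ Fin q) ℝ)
    (B : Matrix (Fin p) (Fin p) ℝ) (Q : Matrix (Fin q) (Fin q) ℝ)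
    (hB : B.PosSemidef) (hQ : Q.PosSemidef) :
    0 ≤ Real.log (1 + Z * Matrix.fromBlocks B 0 0 Q * Zᵀ).det -
        Real.log (1 + Z * Matrix.fromBlocks B 0 0 (0 : Matrix (Fin q) (Fin q) ℝ) * Zᵀ).det ∧
      Real.log (1 + Z * Matrix.fromBlocks B 0 0 Q * Zᵀ).det -
        Real.log (1 + Z * Matrix.fromBlocks B 0 0 (0 : Matrix (Fin q) (Fin q) ℝ) * Zᵀ).det ≤
        Real.log (1 + Z * Matrix.fromBlocks (0 : Matrix (Fin p) (Fin p) ℝ) 0 0 Q * Zᵀ).det := by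
  simp only [mul_fromBlocks_zero_mul_transpose, Matrix.mul_zero, Matrix.zero_mul, add_zero,
    zero_add]
  set A := Z.toCols₁ * B * Z.toCols₁ᵀ
  set C := Z.toCols₂ * Q * Z.toCols₂ᵀ
  have hA : A.PosSemidef := by
    simpa only [conjTranspose_eq_transpose_of_trivial] using
      hB.mul_mul_conjTranspose_same Z.toCols₁
  have hC : C.PosSemidef := by
    simpa only [conjTranspose_eq_transpose_of_trivial] using
      hQ.mul_mul_conjTranspose_same Z.toCols₂
  have hPA : (1 + A).PosDef := PosDef.one.add_posSemidef hA
  have hPC : (1 + C).PosDef := PosDef.one.add_posSemidef hC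
  constructor
  · refine sub_nonneg.mpr (Real.log_le_log hPA.det_pos ?_)
    simpa only [add_assoc] using hPA.det_le_det_add hC
  · rw [sub_le_iff_le_add', ← Real.log_mul hPA.det_pos.ne' hPC.det_pos.ne']
    exact Real.log_le_log (PosDef.one.add_posSemidef (hA.add hC)).det_pos
      (hA.det_one_add_add_le hC)
end

section
/- Let V_Kᵀ S have full rank K where V_K ∈ ℝ^{n×K} contains the top K right singular vectors of A ∈ ℝ^{m×n}, S ∈ ℝ^{n×K} is a column selection matrix, and ζ = ‖(V_Kᵀ S)⁻¹‖₂. Then for each 1 ≤ j ≤ K, the j-th singular value of AS satisfies σ_j(AS) ≥ σ_j(A)/ζ, and consequently logdet(I + Sᵀ Aᵀ A S) ≥ logdet(I + Σ_K²/ζ²). -/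
/-!
Put `W = Vᵀ S`, so `‖x‖ ≤ ζ ‖W x‖`. Because `Aᵀ A V = V Σ_K²` with `Vᵀ V = 1`, the difference
`Aᵀ A - V Σ_K² Vᵀ` equals `Pᵀ Aᵀ A P` for the projection `P = 1 - V Vᵀ`, so it is positive
semidefinite and `xᵀ (AS)ᵀ (AS) x ≥ (W x)ᵀ Σ_K² (W x)`. On the `(j+1)`-dimensional subspace where
`(W x)_i = 0` for `i > j`, the right-hand side is at least `σ_j² ‖W x‖² ≥ σ_j² ‖x‖² / ζ²`, and the
Courant–Fischer principle gives `σ_j(AS)² ≥ σ_j² / ζ²`. The determinant bound follows since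
`det (1 + (AS)ᵀ (AS))` is the product of the `1 + σ_j(AS)²`.
-/

open Matrix Module

section DotProduct

variable {ι κ : Type*} [Fintype ι] [Fintype κ]

lemma dotProduct_transpose_mul_mul_mulVec (P : Matrix ι κ ℝ) (N : Matrix ι ι ℝ) (x : κ → ℝ) :
    x ⬝ᵥ (Pᵀ * N * P) *ᵥ x = (P *ᵥ x) ⬝ᵥ N *ᵥ (P *ᵥ x) := by
  rw [← mulVec_mulVec, ← mulVec_mulVec, dotProduct_mulVec, vecMul_transpose]

lemma dotProduct_transpose_mul_self_mulVec_nonneg (P : Matrix ι κ ℝ) (x : κ → ℝ) :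
    0 ≤ x ⬝ᵥ (Pᵀ * P) *ᵥ x := by
  simpa using (posSemidef_conjTranspose_mul_self P).dotProduct_mulVec_nonneg x

lemma dotProduct_self_pos {x : ι → ℝ} (hx : x ≠ 0) : 0 < x ⬝ᵥ x := by
  simpa using dotProduct_star_self_pos_iff.2 hx

lemma dotProduct_self_eq_norm_sq (x : ι → ℝ) : x ⬝ᵥ x = ‖WithLp.toLp 2 x‖ ^ 2 := by
  rw [← real_inner_self_eq_norm_sq, EuclideanSpace.inner_eq_star_dotProduct, star_trivial]

variable [DecidableEq ι]

lemma mul_dotProduct_self_le_dotProduct_diagonal_mulVec {c : ℝ} {a z : ι → ℝ}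
    (h : ∀ i, z i ≠ 0 → c ≤ a i) : c * (z ⬝ᵥ z) ≤ z ⬝ᵥ diagonal a *ᵥ z := by
  simp only [dotProduct, mulVec_diagonal, Finset.mul_sum]
  refine Finset.sum_le_sum fun i _ => ?_
  by_cases hz : z i = 0
  · simp [hz]
  · nlinarith [h i hz, mul_self_nonneg (z i)]

lemma dotProduct_diagonal_mulVec_le_mul_dotProduct_self {c : ℝ} {a z : ι → ℝ}
    (h : ∀ i, z i ≠ 0 → a i ≤ c) : z ⬝ᵥ diagonal a *ᵥ z ≤ c * (z ⬝ᵥ z) := by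
  simp only [dotProduct, mulVec_diagonal, Finset.mul_sum]
  refine Finset.sum_le_sum fun i _ => ?_
  by_cases hz : z i = 0
  · simp [hz]
  · nlinarith [h i hz, mul_self_nonneg (z i)]

lemma dotProduct_mulVec_self_le_norm_sq_mul (B : Matrix ι ι ℝ) (x : ι → ℝ) :
    (B *ᵥ x) ⬝ᵥ (B *ᵥ x) ≤ ‖toEuclideanCLM (𝕜 := ℝ) B‖ ^ 2 * (x ⬝ᵥ x) := by
  have h := (toEuclideanCLM (𝕜 := ℝ) B).le_opNorm (WithLp.toLp 2 x)
  rw [toEuclideanCLM_toLp] at h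
  rw [dotProduct_self_eq_norm_sq, dotProduct_self_eq_norm_sq, ← mul_pow]
  exact pow_le_pow_left₀ (norm_nonneg _) h 2

end DotProduct

lemma Module.finrank_le_finrank_ker_add_card {𝕜 V s : Type*} [Field 𝕜] [AddCommGroup V]
    [Module 𝕜 V] [FiniteDimensional 𝕜 V] [Fintype s] (f : V →ₗ[𝕜] s → 𝕜) :
    finrank 𝕜 V ≤ finrank 𝕜 (LinearMap.ker f) + Fintype.card s := by
  have h₁ := f.finrank_range_add_finrank_ker
  have h₂ := (LinearMap.range f).finrank_le
  rw [finrank_fintype_fun_eq_card] at h₂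
  omega

namespace Matrix.IsHermitian

variable {ι : Type*} [Fintype ι] [DecidableEq ι] {M : Matrix ι ι ℝ}

lemma exists_orthogonal_eq_transpose_mul_diagonal_mul (hM : M.IsHermitian) :
    ∃ Q : Matrix ι ι ℝ, Qᵀ * Q = 1 ∧ M = Qᵀ * diagonal hM.eigenvalues * Q := by
  refine ⟨star (hM.eigenvectorUnitary : Matrix ι ι ℝ), ?_, ?_⟩
  · simpa [star_eq_conjTranspose] using (mem_unitaryGroup_iff).mp hM.eigenvectorUnitary.2
  · conv_lhs => rw [hM.spectral_theorem, Unitary.conjStarAlgAut_apply]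
    simp [star_eq_conjTranspose]

lemma det_one_add (hM : M.IsHermitian) : (1 + M).det = ∏ i, (1 + hM.eigenvalues i) := by
  obtain ⟨Q, hQ, hMQ⟩ := hM.exists_orthogonal_eq_transpose_mul_diagonal_mul
  have h : 1 + M = Qᵀ * (1 + diagonal hM.eigenvalues) * Q := by
    rw [mul_add, add_mul, ← hMQ, Matrix.mul_one, hQ]
  rw [h, det_mul, det_mul, mul_right_comm, ← det_mul, hQ, det_one, one_mul, ← diagonal_one,
    diagonal_add, det_diagonal]

lemma sum_log_one_add_le_log_det_one_add (hM : M.IsHermitian) {a : ι → ℝ} (ha : ∀ i, 0 ≤ a i)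
    (e : ι ≃ ι) (h : ∀ i, a i ≤ hM.eigenvalues (e i)) :
    ∑ i, Real.log (1 + a i) ≤ Real.log (1 + M).det := by
  have hpos : ∀ k, 0 < 1 + hM.eigenvalues k := fun k => by
    obtain ⟨i, rfl⟩ := e.surjective k
    linarith [ha i, h i]
  rw [hM.det_one_add, Real.log_prod fun k _ => (hpos k).ne',
    ← e.sum_comp fun k => Real.log (1 + hM.eigenvalues k)]
  exact Finset.sum_le_sum fun i _ => Real.log_le_log (by linarith [ha i]) (by linarith [h i])

theorem le_eigenvalue_of_forall_mem_submodule {K : ℕ} {M : Matrix (Fin K) (Fin K) ℝ}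
    (hM : M.IsHermitian) {ν : Fin K → ℝ} (hν : Antitone ν) {e : Fin K ≃ Fin K}
    (hνe : ν = hM.eigenvalues ∘ e) {j : Fin K} {T : Submodule ℝ (Fin K → ℝ)} (hT : (j : ℕ) + 1 ≤ finrank ℝ T) {c : ℝ}
    (hc : ∀ x ∈ T, c * (x ⬝ᵥ x) ≤ x ⬝ᵥ M *ᵥ x) : c ≤ ν j := by
  obtain ⟨Q, hQ, hMQ⟩ := hM.exists_orthogonal_eq_transpose_mul_diagonal_mul
  let L : (Fin K → ℝ) →ₗ[ℝ] ({i : Fin K // i < j} → ℝ) :=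
    LinearMap.pi fun i => LinearMap.proj (e i) ∘ₗ mulVecLin Q
  have hL := finrank_le_finrank_ker_add_card L
  rw [Fintype.card_subtype, Finset.filter_gt_eq_Iio, Fin.card_Iio,
    finrank_fintype_fun_eq_card, Fintype.card_fin] at hL
  -- `x` has no component along the eigenvectors of the `j` largest eigenvalues
  obtain ⟨x, hxT, hxL, hx⟩ : ∃ x ∈ T, x ∈ LinearMap.ker L ∧ x ≠ 0 := by
    by_contra! h
    have := Submodule.finrank_add_finrank_le_of_disjoint (Submodule.disjoint_def.2 h)
    rw [finrank_fintype_fun_eq_card, Fintype.card_fin] at this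
    omega
  have hQx : ∀ k, (Q *ᵥ x) k ≠ 0 → hM.eigenvalues k ≤ ν j := by
    intro k hk
    have hjk : j ≤ e.symm k := not_lt.1 fun hlt => hk <| by
      simpa [L] using congr_fun (LinearMap.mem_ker.1 hxL) ⟨_, hlt⟩
    simpa [hνe] using hν hjk
  have hxx : x ⬝ᵥ x = (Q *ᵥ x) ⬝ᵥ (Q *ᵥ x) := by
    simpa [hQ] using dotProduct_transpose_mul_mul_mulVec Q 1 x
  refine le_of_mul_le_mul_right ?_ (dotProduct_self_pos hx)
  calc c * (x ⬝ᵥ x) ≤ x ⬝ᵥ M *ᵥ x := hc x hxT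
    _ = x ⬝ᵥ (Qᵀ * diagonal hM.eigenvalues * Q) *ᵥ x := by rw [← hMQ]
    _ = (Q *ᵥ x) ⬝ᵥ diagonal hM.eigenvalues *ᵥ (Q *ᵥ x) := dotProduct_transpose_mul_mul_mulVec ..
    _ ≤ ν j * (x ⬝ᵥ x) := by
      rw [hxx]; exact dotProduct_diagonal_mulVec_le_mul_dotProduct_self hQx

end Matrix.IsHermitian

section TopSingularVectors

variable {m n k : Type*} [Fintype m] [Fintype n] [Fintype k] [DecidableEq k]
  {A : Matrix m n ℝ} {V : Matrix n k ℝ} {d : k → ℝ}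

lemma transpose_mul_self_eq_diagonal_of_mul_eq (hV : Vᵀ * V = 1)
    (hAV : Aᵀ * A * V = V * diagonal d) : (A * V)ᵀ * (A * V) = diagonal d := by
  rw [transpose_mul, Matrix.mul_assoc, ← Matrix.mul_assoc Aᵀ, hAV, ← Matrix.mul_assoc, hV,
    Matrix.one_mul]

lemma nonneg_of_mul_eq_mul_diagonal (hV : Vᵀ * V = 1) (hAV : Aᵀ * A * V = V * diagonal d)
    (i : k) : 0 ≤ d i := by
  have := (posSemidef_conjTranspose_mul_self (A * V)).diag_nonneg (i := i)
  rwa [conjTranspose_eq_transpose_of_trivial, transpose_mul_self_eq_diagonal_of_mul_eq hV hAV,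
    diagonal_apply_eq] at this

/-- `Aᵀ A - V D Vᵀ = (A (1 - V Vᵀ))ᵀ (A (1 - V Vᵀ))` is positive semidefinite. -/
lemma dotProduct_diagonal_mulVec_le_of_mul_eq [DecidableEq n] (hV : Vᵀ * V = 1)
    (hAV : Aᵀ * A * V = V * diagonal d) (y : n → ℝ) :
    (Vᵀ *ᵥ y) ⬝ᵥ diagonal d *ᵥ (Vᵀ *ᵥ y) ≤ y ⬝ᵥ (Aᵀ * A) *ᵥ y := by
  have hVA : Vᵀ * (Aᵀ * A) = diagonal d * Vᵀ := by
    simpa [transpose_mul, Matrix.mul_assoc] using congrArg transpose hAV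
  have hP : (1 - V * Vᵀ)ᵀ = 1 - V * Vᵀ := by simp [transpose_sub]
  have hVDV : V * diagonal d * Vᵀ * (V * Vᵀ) = V * diagonal d * Vᵀ := by
    rw [Matrix.mul_assoc _ Vᵀ, ← Matrix.mul_assoc Vᵀ, hV, Matrix.one_mul]
  have key : (A * (1 - V * Vᵀ))ᵀ * (A * (1 - V * Vᵀ)) = Aᵀ * A - (Vᵀ)ᵀ * diagonal d * Vᵀ := by
    calc (A * (1 - V * Vᵀ))ᵀ * (A * (1 - V * Vᵀ))
        = Aᵀ * A - V * Vᵀ * (Aᵀ * A) - Aᵀ * A * (V * Vᵀ) + V * Vᵀ * (Aᵀ * A) * (V * Vᵀ) := by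
          rw [transpose_mul, hP, Matrix.mul_assoc, ← Matrix.mul_assoc Aᵀ A]; noncomm_ring
      _ = Aᵀ * A - (Vᵀ)ᵀ * diagonal d * Vᵀ := by
          rw [Matrix.mul_assoc V, hVA, ← Matrix.mul_assoc, ← Matrix.mul_assoc, hAV, hVDV,
            transpose_transpose]
          abel
  have := dotProduct_transpose_mul_self_mulVec_nonneg (A * (1 - V * Vᵀ)) y
  rw [key, sub_mulVec, dotProduct_sub, dotProduct_transpose_mul_mul_mulVec] at this
  linarith

end TopSingularVectors

theorem div_norm_inv_sq_le_eigenvalue {m n : Type*} [Fintype m] [Fintype n] [DecidableEq n]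
    {K : ℕ} {A : Matrix m n ℝ} {V S : Matrix n (Fin K) ℝ} {d : Fin K → ℝ} (hd : Antitone d)
    (hV : Vᵀ * V = 1) (hAV : Aᵀ * A * V = V * diagonal d) (hW : IsUnit (Vᵀ * S).det)
    (hM : ((A * S)ᵀ * (A * S)).IsHermitian) {ν : Fin K → ℝ} (hν : Antitone ν)
    {e : Fin K ≃ Fin K} (hνe : ν = hM.eigenvalues ∘ e) (j : Fin K) :
    d j / ‖toEuclideanCLM (𝕜 := ℝ) (Vᵀ * S)⁻¹‖ ^ 2 ≤ ν j := by
  set W := Vᵀ * S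
  set ζ := ‖toEuclideanCLM (𝕜 := ℝ) W⁻¹‖
  let L : (Fin K → ℝ) →ₗ[ℝ] ({i : Fin K // j < i} → ℝ) :=
    LinearMap.pi fun i => LinearMap.proj (i : Fin K) ∘ₗ mulVecLin W
  have hL := finrank_le_finrank_ker_add_card L
  rw [Fintype.card_subtype, Finset.filter_lt_eq_Ioi, Fin.card_Ioi, finrank_fintype_fun_eq_card,
    Fintype.card_fin] at hL
  refine hM.le_eigenvalue_of_forall_mem_submodule hν hνe (T := LinearMap.ker L) (by omega)
    fun x hx => ?_
  have hWx : ∀ i, (W *ᵥ x) i ≠ 0 → d j ≤ d i := fun i hi => hd <| not_lt.1 fun hlt => hi <| by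
    simpa [L] using congr_fun (LinearMap.mem_ker.1 hx) ⟨i, hlt⟩
  have hnorm : x ⬝ᵥ x ≤ ζ ^ 2 * ((W *ᵥ x) ⬝ᵥ (W *ᵥ x)) := by
    simpa [nonsing_inv_mul _ hW] using dotProduct_mulVec_self_le_norm_sq_mul W⁻¹ (W *ᵥ x)
  have hdj := nonneg_of_mul_eq_mul_diagonal hV hAV j
  calc d j / ζ ^ 2 * (x ⬝ᵥ x) ≤ d j * ((W *ᵥ x) ⬝ᵥ (W *ᵥ x)) := by
        rcases eq_or_ne ζ 0 with hζ | hζ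
        · simpa [hζ] using mul_nonneg hdj (by simpa using dotProduct_star_self_nonneg (W *ᵥ x))
        · calc d j / ζ ^ 2 * (x ⬝ᵥ x) ≤ d j / ζ ^ 2 * (ζ ^ 2 * ((W *ᵥ x) ⬝ᵥ (W *ᵥ x))) := by
                gcongr
            _ = d j * ((W *ᵥ x) ⬝ᵥ (W *ᵥ x)) := by field_simp
    _ ≤ (W *ᵥ x) ⬝ᵥ diagonal d *ᵥ (W *ᵥ x) := mul_dotProduct_self_le_dotProduct_diagonal_mulVec hWx
    _ = (Vᵀ *ᵥ (S *ᵥ x)) ⬝ᵥ diagonal d *ᵥ (Vᵀ *ᵥ (S *ᵥ x)) := by simp only [W, mulVec_mulVec]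
    _ ≤ (S *ᵥ x) ⬝ᵥ (Aᵀ * A) *ᵥ (S *ᵥ x) := dotProduct_diagonal_mulVec_le_of_mul_eq hV hAV _
    _ = x ⬝ᵥ ((A * S)ᵀ * (A * S)) *ᵥ x := by
        rw [← dotProduct_transpose_mul_mul_mulVec, transpose_mul, Matrix.mul_assoc,
          Matrix.mul_assoc, Matrix.mul_assoc]

theorem stmt13_general (m n K : ℕ) (hK : K ≤ n)
    (A : Matrix (Fin m) (Fin n) ℝ)
    (μ : Fin n → ℝ) (hμmono : Antitone μ)
    (V : Matrix (Fin n) (Fin K) ℝ) (hVorth : Vᵀ * V = 1)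
    (hVeig : Aᵀ * A * V = V * Matrix.diagonal (fun j : Fin K => μ (Fin.castLE hK j)))
    (S : Matrix (Fin n) (Fin K) ℝ)
    (hfull : IsUnit (Vᵀ * S).det)
    (ζ : ℝ) (hζ : ζ = ‖Matrix.toEuclideanCLM (𝕜 := ℝ) ((Vᵀ * S)⁻¹)‖)
    (hHS : ((A * S)ᵀ * (A * S)).IsHermitian)
    (ν : Fin K → ℝ) (hνmono : Antitone ν)
    (hνperm : ∃ e : Fin K ≃ Fin K, ν = hHS.eigenvalues ∘ e) :
    (∀ j : Fin K, Real.sqrt (μ (Fin.castLE hK j)) / ζ ≤ Real.sqrt (ν j)) ∧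
      (∑ j : Fin K, Real.log (1 + μ (Fin.castLE hK j) / ζ ^ 2)) ≤
        Real.log (1 + Sᵀ * (Aᵀ * A) * S).det := by
  obtain ⟨e, hνe⟩ := hνperm
  have hd : Antitone fun j : Fin K => μ (Fin.castLE hK j) :=
    hμmono.comp_monotone fun _ _ => (Fin.castLE_le_castLE_iff hK).2
  have hμν : ∀ j, μ (Fin.castLE hK j) / ζ ^ 2 ≤ ν j :=
    hζ ▸ div_norm_inv_sq_le_eigenvalue hd hVorth hVeig hfull hHS hνmono hνe
  have hμ := nonneg_of_mul_eq_mul_diagonal hVorth hVeig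
  have hζ₀ : 0 ≤ ζ := hζ ▸ norm_nonneg _
  refine ⟨fun j => ?_, ?_⟩
  · calc √(μ (Fin.castLE hK j)) / ζ = √(μ (Fin.castLE hK j) / ζ ^ 2) := by
          rw [Real.sqrt_div' _ (sq_nonneg ζ), Real.sqrt_sq hζ₀]
      _ ≤ √(ν j) := Real.sqrt_le_sqrt (hμν j)
  · rw [show Sᵀ * (Aᵀ * A) * S = (A * S)ᵀ * (A * S) by simp [transpose_mul, Matrix.mul_assoc]]
    exact hHS.sum_log_one_add_le_log_det_one_add (fun j => div_nonneg (hμ j) (sq_nonneg ζ)) e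
      (by simpa [hνe] using hμν)

/-- GKS lower bound: if `V` holds the top-`K` right singular vectors of `A`
(columns of `V` are orthonormal eigenvectors of `AᵀA` for its `K` largest
eigenvalues `μ_1 ≥ … ≥ μ_K`, with `μ` the decreasing enumeration of the
eigenvalues of `AᵀA`), `S` is a column-selection matrix with `Vᵀ S` invertible,
and `ζ = ‖(Vᵀ S)⁻¹‖₂` (spectral norm), then `σ_j(AS) ≥ σ_j(A)/ζ` for `1 ≤ j ≤ K`
(where `ν` is the decreasing enumeration of the eigenvalues of `(AS)ᵀ(AS)`, so
`σ_j(AS) = √(ν j)` and `σ_j(A) = √(μ j)`), and consequently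
`logdet(I + Sᵀ Aᵀ A S) ≥ ∑_{j=1}^K log(1 + μ_j/ζ²)`. -/
theorem stmt13 (m n K : ℕ) (hK : K ≤ n)
    (A : Matrix (Fin m) (Fin n) ℝ)
    (hH : (Aᵀ * A).IsHermitian)
    (μ : Fin n → ℝ) (hμmono : Antitone μ)
    (hμperm : ∃ e : Fin n ≃ Fin n, μ = hH.eigenvalues ∘ e)
    (V : Matrix (Fin n) (Fin K) ℝ) (hVorth : Vᵀ * V = 1)
    (hVeig : Aᵀ * A * V = V * Matrix.diagonal (fun j : Fin K => μ (Fin.castLE hK j)))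
    (σsel : Fin K ↪ Fin n)
    (S : Matrix (Fin n) (Fin K) ℝ)
    (hS : S = Matrix.of fun i j => if i = σsel j then (1 : ℝ) else 0)
    (hfull : IsUnit (Vᵀ * S).det)
    (ζ : ℝ) (hζ : ζ = ‖Matrix.toEuclideanCLM (𝕜 := ℝ) ((Vᵀ * S)⁻¹)‖)
    (hHS : ((A * S)ᵀ * (A * S)).IsHermitian)
    (ν : Fin K → ℝ) (hνmono : Antitone ν)
    (hνperm : ∃ e : Fin K ≃ Fin K, ν = hHS.eigenvalues ∘ e) :
    (∀ j : Fin K, Real.sqrt (μ (Fin.castLE hK j)) / ζ ≤ Real.sqrt (ν j)) ∧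
      (∑ j : Fin K, Real.log (1 + μ (Fin.castLE hK j) / ζ ^ 2)) ≤
        Real.log (1 + Sᵀ * (Aᵀ * A) * S).det :=
  stmt13_general m n K hK A μ hμmono V hVorth hVeig S hfull ζ hζ hHS ν hνmono hνperm
end
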